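/- arXiv:2509.12689 — 4 statements merged into one kernel-verified Lean document; each statement's English description precedes it below -/
import Mathlib

section
/- The parametrized type-1 discrete Mahalanobis (Wasserstein) distance is not convex in the parameter matrix L: there exist discrete probability distributions P, Q on ℝ² and lower-triangular positive-definite 2×2 matrices L₁, L₂ such that d₁(P,Q; (L₁+L₂)/2) > (d₁(P,Q;L₁) + d₁(P,Q;L₂))/2. -/
open scoped BigOperators Matrix

/-- Euclidean norm of a vector in `ℝ^2`. -/
noncomputable def enorm4 (v : Fin 2 → ℝ) : ℝ := Real.sqrt (∑ i, v i ^ 2)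

/-- The parametrized type-1 discrete Mahalanobis (Wasserstein) distance between
two discrete distributions with atoms `x i` (weights `p i`) and `y j`
(weights `q j`), as the optimal value of the transport linear program with
ground cost `‖Lᵀ(xᵢ − yⱼ)‖₂`. -/
noncomputable def discreteW1 {I J : ℕ} (x : Fin I → Fin 2 → ℝ) (p : Fin I → ℝ)
    (y : Fin J → Fin 2 → ℝ) (q : Fin J → ℝ) (L : Matrix (Fin 2) (Fin 2) ℝ) : ℝ :=
  sInf {v : ℝ | ∃ π : Fin I → Fin J → ℝ,
    (∀ i j, 0 ≤ π i j) ∧ (∀ j, ∑ i, π i j = q j) ∧ (∀ i, ∑ j, π i j = p i) ∧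
    v = ∑ i, ∑ j, enorm4 (Lᵀ.mulVec (x i - y j)) * π i j}

lemma enorm4_nonneg (v : Fin 2 → ℝ) : 0 ≤ enorm4 v := Real.sqrt_nonneg _

lemma enorm4_le {v : Fin 2 → ℝ} {r : ℝ} (hr : 0 ≤ r) (h : v 0 ^ 2 + v 1 ^ 2 ≤ r ^ 2) :
    enorm4 v ≤ r := by
  rw [enorm4, Fin.sum_univ_two]
  calc Real.sqrt (v 0 ^ 2 + v 1 ^ 2) ≤ Real.sqrt (r ^ 2) := Real.sqrt_le_sqrt h
    _ = r := Real.sqrt_sq hr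

lemma le_enorm4 {v : Fin 2 → ℝ} {r : ℝ} (hr : 0 ≤ r) (h : r ^ 2 ≤ v 0 ^ 2 + v 1 ^ 2) :
    r ≤ enorm4 v := by
  rw [enorm4, Fin.sum_univ_two]
  calc r = Real.sqrt (r ^ 2) := (Real.sqrt_sq hr).symm
    _ ≤ _ := Real.sqrt_le_sqrt h

lemma discreteW1_le {I J : ℕ} (x : Fin I → Fin 2 → ℝ) (p : Fin I → ℝ)
    (y : Fin J → Fin 2 → ℝ) (q : Fin J → ℝ) (L : Matrix (Fin 2) (Fin 2) ℝ)
    (π : Fin I → Fin J → ℝ)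
    (hnn : ∀ i j, 0 ≤ π i j) (hq : ∀ j, ∑ i, π i j = q j) (hp : ∀ i, ∑ j, π i j = p i) :
    discreteW1 x p y q L ≤ ∑ i, ∑ j, enorm4 (Lᵀ.mulVec (x i - y j)) * π i j := by
  apply csInf_le
  · refine ⟨0, ?_⟩
    rintro v ⟨π', h1, _, _, rfl⟩
    exact Finset.sum_nonneg fun i _ => Finset.sum_nonneg fun j _ =>
      mul_nonneg (Real.sqrt_nonneg _) (h1 i j)
  · exact ⟨π, hnn, hq, hp, rfl⟩

lemma le_discreteW1 {I J : ℕ} (x : Fin I → Fin 2 → ℝ) (p : Fin I → ℝ)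
    (y : Fin J → Fin 2 → ℝ) (q : Fin J → ℝ) (L : Matrix (Fin 2) (Fin 2) ℝ) (c : ℝ)
    (π₀ : Fin I → Fin J → ℝ)
    (hnn₀ : ∀ i j, 0 ≤ π₀ i j) (hq₀ : ∀ j, ∑ i, π₀ i j = q j) (hp₀ : ∀ i, ∑ j, π₀ i j = p i)
    (h : ∀ π : Fin I → Fin J → ℝ, (∀ i j, 0 ≤ π i j) → (∀ j, ∑ i, π i j = q j) →
      (∀ i, ∑ j, π i j = p i) →
      c ≤ ∑ i, ∑ j, enorm4 (Lᵀ.mulVec (x i - y j)) * π i j) :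
    c ≤ discreteW1 x p y q L := by
  refine le_csInf ⟨∑ i, ∑ j, enorm4 (Lᵀ.mulVec (x i - y j)) * π₀ i j,
    π₀, hnn₀, hq₀, hp₀, rfl⟩ ?_
  rintro v ⟨π, h1, h2, h3, rfl⟩
  exact h π h1 h2 h3

/-- nonconvexity of the type-1 discrete Mahalanobis distance in the
parameter matrix `L`: there exist discrete probability distributions on `ℝ²` and
lower-triangular positive-definite matrices `L₁, L₂` with
`d₁(P,Q;(L₁+L₂)/2) > (d₁(P,Q;L₁) + d₁(P,Q;L₂))/2`. -/
theorem discreteW1_not_convex :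
    ∃ (I J : ℕ) (x : Fin I → Fin 2 → ℝ) (p : Fin I → ℝ)
      (y : Fin J → Fin 2 → ℝ) (q : Fin J → ℝ)
      (L₁ L₂ : Matrix (Fin 2) (Fin 2) ℝ),
      (∀ i, 0 ≤ p i) ∧ (∑ i, p i = 1) ∧
      (∀ j, 0 ≤ q j) ∧ (∑ j, q j = 1) ∧
      (∀ i j : Fin 2, i < j → L₁ i j = 0) ∧ (∀ i : Fin 2, 0 < L₁ i i) ∧
      (∀ i j : Fin 2, i < j → L₂ i j = 0) ∧ (∀ i : Fin 2, 0 < L₂ i i) ∧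
      discreteW1 x p y q ((1 / 2 : ℝ) • (L₁ + L₂)) >
        (discreteW1 x p y q L₁ + discreteW1 x p y q L₂) / 2 := by
  refine ⟨2, 2, ![![0.7, 0.4], ![1.7, 1]], ![0.4, 0.6], ![![1.8, 0.1], ![0.5, 1.4]],
    ![0.5, 0.5], !![1, 0; 0.5, 0.5], !![0.5, 0; 1, 1], ?_, ?_, ?_, ?_, ?_, ?_, ?_, ?_, ?_⟩
  · intro i; fin_cases i <;> norm_num
  · simp [Fin.sum_univ_two]; norm_num
  · intro j; fin_cases j <;> norm_num
  · simp [Fin.sum_univ_two]; norm_num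
  · intro i j h; fin_cases i <;> fin_cases j <;> first | (exfalso; exact absurd h (by decide)) | norm_num
  · intro i; fin_cases i <;> norm_num
  · intro i j h; fin_cases i <;> fin_cases j <;> first | (exfalso; exact absurd h (by decide)) | norm_num
  · intro i; fin_cases i <;> norm_num
  · have hM : ((1 / 2 : ℝ) • ((!![1, 0; 0.5, 0.5] : Matrix (Fin 2) (Fin 2) ℝ) + !![0.5, 0; 1, 1]))
        = !![(0.75 : ℝ), 0; 0.75, 0.75] := by
      ext i j
      fin_cases i <;> fin_cases j <;> simp <;> norm_num
    rw [hM]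
    have h1 : discreteW1 ![![0.7, 0.4], ![1.7, 1]] ![0.4, 0.6] ![![1.8, 0.1], ![0.5, 1.4]]
        ![0.5, 0.5] (!![1, 0; 0.5, 0.5] : Matrix (Fin 2) (Fin 2) ℝ) ≤ 0.62028 := by
      have := discreteW1_le ![![0.7, 0.4], ![1.7, 1]] ![0.4, 0.6] ![![1.8, 0.1], ![0.5, 1.4]]
        ![0.5, 0.5] (!![1, 0; 0.5, 0.5] : Matrix (Fin 2) (Fin 2) ℝ) ![![0, 0.4], ![0.5, 0.1]]
        (by intro i j; fin_cases i <;> fin_cases j <;> norm_num)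
        (by intro j; fin_cases j <;> simp [Fin.sum_univ_two] <;> norm_num)
        (by intro i; fin_cases i <;> simp [Fin.sum_univ_two] <;> norm_num)
      refine this.trans ?_
      rw [Fin.sum_univ_two, Fin.sum_univ_two, Fin.sum_univ_two]
      have c01 : enorm4 ((!![(1:ℝ), 0; 0.5, 0.5])ᵀ.mulVec (![(0.7:ℝ), 0.4] - ![(0.5:ℝ), 1.4])) ≤ 0.5831 := by
        apply enorm4_le (by norm_num)
        simp [Matrix.mulVec, dotProduct, Fin.sum_univ_two]
        norm_num
      have c10 : enorm4 ((!![(1:ℝ), 0; 0.5, 0.5])ᵀ.mulVec (![(1.7:ℝ), 1] - ![(1.8:ℝ), 0.1])) ≤ 0.5701 := by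
        apply enorm4_le (by norm_num)
        simp [Matrix.mulVec, dotProduct, Fin.sum_univ_two]
        norm_num
      have c11 : enorm4 ((!![(1:ℝ), 0; 0.5, 0.5])ᵀ.mulVec (![(1.7:ℝ), 1] - ![(0.5:ℝ), 1.4])) ≤ 1.0199 := by
        apply enorm4_le (by norm_num)
        simp [Matrix.mulVec, dotProduct, Fin.sum_univ_two]
        norm_num
      simp only [Matrix.cons_val_zero, Matrix.cons_val_one, Matrix.head_cons]
      nlinarith [c01, c10, c11, enorm4_nonneg ((!![(1:ℝ), 0; 0.5, 0.5])ᵀ.mulVec (![(0.7:ℝ), 0.4] - ![(1.8:ℝ), 0.1]))]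
    have h2 : discreteW1 ![![0.7, 0.4], ![1.7, 1]] ![0.4, 0.6] ![![1.8, 0.1], ![0.5, 1.4]]
        ![0.5, 0.5] (!![0.5, 0; 1, 1] : Matrix (Fin 2) (Fin 2) ℝ) ≤ 0.50369 := by
      have := discreteW1_le ![![0.7, 0.4], ![1.7, 1]] ![0.4, 0.6] ![![1.8, 0.1], ![0.5, 1.4]]
        ![0.5, 0.5] (!![0.5, 0; 1, 1] : Matrix (Fin 2) (Fin 2) ℝ) ![![0.4, 0], ![0.1, 0.5]]
        (by intro i j; fin_cases i <;> fin_cases j <;> norm_num)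
        (by intro j; fin_cases j <;> simp [Fin.sum_univ_two] <;> norm_num)
        (by intro i; fin_cases i <;> simp [Fin.sum_univ_two] <;> norm_num)
      refine this.trans ?_
      rw [Fin.sum_univ_two, Fin.sum_univ_two, Fin.sum_univ_two]
      have c00 : enorm4 ((!![(0.5:ℝ), 0; 1, 1])ᵀ.mulVec (![(0.7:ℝ), 0.4] - ![(1.8:ℝ), 0.1])) ≤ 0.3906 := by
        apply enorm4_le (by norm_num)
        simp [Matrix.mulVec, dotProduct, Fin.sum_univ_two]
        norm_num
      have c10 : enorm4 ((!![(0.5:ℝ), 0; 1, 1])ᵀ.mulVec (![(1.7:ℝ), 1] - ![(1.8:ℝ), 0.1])) ≤ 1.238 := by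
        apply enorm4_le (by norm_num)
        simp [Matrix.mulVec, dotProduct, Fin.sum_univ_two]
        norm_num
      have c11 : enorm4 ((!![(0.5:ℝ), 0; 1, 1])ᵀ.mulVec (![(1.7:ℝ), 1] - ![(0.5:ℝ), 1.4])) ≤ 0.4473 := by
        apply enorm4_le (by norm_num)
        simp [Matrix.mulVec, dotProduct, Fin.sum_univ_two]
        norm_num
      simp only [Matrix.cons_val_zero, Matrix.cons_val_one, Matrix.head_cons]
      nlinarith [c00, c10, c11, enorm4_nonneg ((!![(0.5:ℝ), 0; 1, 1])ᵀ.mulVec (![(0.7:ℝ), 0.4] - ![(0.5:ℝ), 1.4]))]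
    have h3 : (0.681 : ℝ) ≤ discreteW1 ![![0.7, 0.4], ![1.7, 1]] ![0.4, 0.6]
        ![![1.8, 0.1], ![0.5, 1.4]] ![0.5, 0.5] (!![(0.75:ℝ), 0; 0.75, 0.75]) := by
      apply le_discreteW1 _ _ _ _ _ _ ![![0, 0.4], ![0.5, 0.1]]
        (by intro i j; fin_cases i <;> fin_cases j <;> norm_num)
        (by intro j; fin_cases j <;> simp [Fin.sum_univ_two] <;> norm_num)
        (by intro i; fin_cases i <;> simp [Fin.sum_univ_two] <;> norm_num)
      intro π hnn hq hp
      have e1 := hq 0; have e2 := hq 1; have e3 := hp 0; have e4 := hp 1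
      rw [Fin.sum_univ_two] at e1 e2 e3 e4
      simp only [Matrix.cons_val_zero, Matrix.cons_val_one, Matrix.head_cons] at e1 e2 e3 e4
      rw [Fin.sum_univ_two, Fin.sum_univ_two, Fin.sum_univ_two]
      have c00 : (0.64:ℝ) ≤ enorm4 ((!![(0.75:ℝ), 0; 0.75, 0.75])ᵀ.mulVec (![(0.7:ℝ), 0.4] - ![(1.8:ℝ), 0.1])) := by
        apply le_enorm4 (by norm_num)
        simp [Matrix.mulVec, dotProduct, Fin.sum_univ_two]
        norm_num
      have c01 : (0.96:ℝ) ≤ enorm4 ((!![(0.75:ℝ), 0; 0.75, 0.75])ᵀ.mulVec (![(0.7:ℝ), 0.4] - ![(0.5:ℝ), 1.4])) := by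
        apply le_enorm4 (by norm_num)
        simp [Matrix.mulVec, dotProduct, Fin.sum_univ_two]
        norm_num
      have c10 : (0.90:ℝ) ≤ enorm4 ((!![(0.75:ℝ), 0; 0.75, 0.75])ᵀ.mulVec (![(1.7:ℝ), 1] - ![(1.8:ℝ), 0.1])) := by
        apply le_enorm4 (by norm_num)
        simp [Matrix.mulVec, dotProduct, Fin.sum_univ_two]
        norm_num
      have c11 : (0.67:ℝ) ≤ enorm4 ((!![(0.75:ℝ), 0; 0.75, 0.75])ᵀ.mulVec (![(1.7:ℝ), 1] - ![(0.5:ℝ), 1.4])) := by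
        apply le_enorm4 (by norm_num)
        simp [Matrix.mulVec, dotProduct, Fin.sum_univ_two]
        norm_num
      simp only [Matrix.cons_val_zero, Matrix.cons_val_one, Matrix.head_cons]
      nlinarith [mul_le_mul_of_nonneg_right c00 (hnn 0 0),
        mul_le_mul_of_nonneg_right c01 (hnn 0 1),
        mul_le_mul_of_nonneg_right c10 (hnn 1 0),
        mul_le_mul_of_nonneg_right c11 (hnn 1 1), hnn 0 1, e1, e2, e3, e4]
    linarith
end

section
/- The squared parametrized Gelbrich distance is not convex in the parameter matrix L: for the mean-covariance pairs (μ_P,Σ_P) with μ_P=(0.4,0.6), Σ_P=diag(0.1,1.0) and (μ_Q,Σ_Q) with μ_Q=(0.4,0.4), Σ_Q=diag(10.0,1.0), and matrices L₁=[[0.7,0],[0.4,1.9]], L₂=[[0.9,0],[0.9,0.6]], one has g(·,·;(L₁+L₂)/2)² > (g(·,·;L₁)² + g(·,·;L₂)²)/2. -/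
open scoped BigOperators Matrix

noncomputable section

/-- Euclidean norm of a vector in `ℝ^d`. -/
def enorm6 {d : ℕ} (v : Fin d → ℝ) : ℝ := Real.sqrt (∑ i, v i ^ 2)

open scoped Classical in
/-- The positive semidefinite square root of a matrix (0 if not PSD). -/
def msqrt6 {d : ℕ} (A : Matrix (Fin d) (Fin d) ℝ) : Matrix (Fin d) (Fin d) ℝ :=
  if h : A.PosSemidef then (h.1.eigenvectorUnitary : Matrix (Fin d) (Fin d) ℝ) *
    Matrix.diagonal ((↑) ∘ (Real.sqrt ·) ∘ h.1.eigenvalues) *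
    (star h.1.eigenvectorUnitary : Matrix (Fin d) (Fin d) ℝ) else 0

lemma msqrt6_spec6 {d : ℕ} {A : Matrix (Fin d) (Fin d) ℝ} (hA : A.PosSemidef) :
    ((hA.1.eigenvectorUnitary : Matrix (Fin d) (Fin d) ℝ) *
      (Matrix.diagonal ((↑) ∘ (Real.sqrt ·) ∘ hA.1.eigenvalues) : Matrix (Fin d) (Fin d) ℝ) *
      (star hA.1.eigenvectorUnitary : Matrix (Fin d) (Fin d) ℝ)).PosSemidef ∧
    (hA.1.eigenvectorUnitary : Matrix (Fin d) (Fin d) ℝ) *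
      (Matrix.diagonal ((↑) ∘ (Real.sqrt ·) ∘ hA.1.eigenvalues) : Matrix (Fin d) (Fin d) ℝ) *
      (star hA.1.eigenvectorUnitary : Matrix (Fin d) (Fin d) ℝ) *
    ((hA.1.eigenvectorUnitary : Matrix (Fin d) (Fin d) ℝ) *
      (Matrix.diagonal ((↑) ∘ (Real.sqrt ·) ∘ hA.1.eigenvalues) : Matrix (Fin d) (Fin d) ℝ) *
      (star hA.1.eigenvectorUnitary : Matrix (Fin d) (Fin d) ℝ)) = A := by
  constructor
  · have hD : (Matrix.diagonal ((↑) ∘ (Real.sqrt ·) ∘ hA.1.eigenvalues) :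
        Matrix (Fin d) (Fin d) ℝ).PosSemidef :=
      .diagonal (fun i => by simp [Real.sqrt_nonneg])
    have := hD.mul_mul_conjTranspose_same (hA.1.eigenvectorUnitary : Matrix (Fin d) (Fin d) ℝ)
    simpa [Matrix.star_eq_conjTranspose] using this
  · conv_rhs => rw [hA.1.spectral_theorem, Unitary.conjStarAlgAut_apply]
    have hU : (star hA.1.eigenvectorUnitary : Matrix (Fin d) (Fin d) ℝ) *
        (hA.1.eigenvectorUnitary : Matrix (Fin d) (Fin d) ℝ) = 1 := Unitary.coe_star_mul_self _
    have hDD : (Matrix.diagonal ((↑) ∘ (Real.sqrt ·) ∘ hA.1.eigenvalues) : Matrix (Fin d) (Fin d) ℝ) *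
        Matrix.diagonal ((↑) ∘ (Real.sqrt ·) ∘ hA.1.eigenvalues) =
        (Matrix.diagonal (RCLike.ofReal ∘ hA.1.eigenvalues) : Matrix (Fin d) (Fin d) ℝ) := by
      rw [Matrix.diagonal_mul_diagonal]
      congr 1
      funext i
      simp [Real.mul_self_sqrt (hA.eigenvalues_nonneg i)]
    calc _ = (hA.1.eigenvectorUnitary : Matrix (Fin d) (Fin d) ℝ) *
          (Matrix.diagonal ((↑) ∘ (Real.sqrt ·) ∘ hA.1.eigenvalues) : Matrix (Fin d) (Fin d) ℝ) *
          ((star hA.1.eigenvectorUnitary : Matrix (Fin d) (Fin d) ℝ) *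
          (hA.1.eigenvectorUnitary : Matrix (Fin d) (Fin d) ℝ)) *
          (Matrix.diagonal ((↑) ∘ (Real.sqrt ·) ∘ hA.1.eigenvalues) : Matrix (Fin d) (Fin d) ℝ) *
          (star hA.1.eigenvectorUnitary : Matrix (Fin d) (Fin d) ℝ) := by
            simp only [Matrix.mul_assoc]
      _ = _ := by rw [hU, Matrix.mul_one, Matrix.mul_assoc _ _ (Matrix.diagonal _), hDD]

/-- The squared parametrized Gelbrich distance between mean-covariance pairs. -/
def gelbrichSq6 {d : ℕ} (μQ : Fin d → ℝ) (SQ : Matrix (Fin d) (Fin d) ℝ)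
    (μP : Fin d → ℝ) (SP : Matrix (Fin d) (Fin d) ℝ)
    (L : Matrix (Fin d) (Fin d) ℝ) : ℝ :=
  enorm6 (Lᵀ.mulVec (μQ - μP)) ^ 2 + ((SQ + SP) * (L * Lᵀ)).trace -
    2 * (msqrt6 (msqrt6 SP * (L * Lᵀ) * SQ * (L * Lᵀ) * msqrt6 SP)).trace

open Matrix in
lemma psd_trace_nonneg6 {S : Matrix (Fin 2) (Fin 2) ℝ} (hS : S.PosSemidef) : 0 ≤ S.trace := by
  exact hS.trace_nonneg

open Matrix in
lemma psd_det_nonneg6 {S : Matrix (Fin 2) (Fin 2) ℝ} (hS : S.PosSemidef) : 0 ≤ S.det := by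
  rw [hS.1.det_eq_prod_eigenvalues]
  exact Finset.prod_nonneg fun i _ => hS.eigenvalues_nonneg i

open Matrix in
lemma trace_msqrt6 {A : Matrix (Fin 2) (Fin 2) ℝ} (hA : A.PosSemidef) :
    (msqrt6 A).trace = Real.sqrt (A.trace + 2 * Real.sqrt A.det) := by
  rw [msqrt6, dif_pos hA]
  have key : ∀ S : Matrix (Fin 2) (Fin 2) ℝ, S.PosSemidef → S * S = A →
      S.trace = Real.sqrt (A.trace + 2 * Real.sqrt A.det) := by
    intro S hS hmul
    subst hmul
    have hdet0 : 0 ≤ S.det := psd_det_nonneg6 hS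
    have htr0 : 0 ≤ S.trace := psd_trace_nonneg6 hS
    have hdet : Real.sqrt (S * S).det = S.det := by
      rw [Matrix.det_mul, Real.sqrt_mul_self hdet0]
    have key2 : (S * S).trace + 2 * Real.sqrt (S * S).det = S.trace ^ 2 := by
      rw [hdet]
      simp only [Matrix.trace_fin_two, Matrix.det_fin_two, Matrix.mul_apply, Fin.sum_univ_two]
      ring
    rw [key2, Real.sqrt_sq htr0]
  exact key _ (msqrt6_spec6 hA).1 (msqrt6_spec6 hA).2

open Matrix in
lemma gelbrich_formula6 (μQ μP : Fin 2 → ℝ) (dP dQ : Fin 2 → ℝ)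
    (hP : 0 ≤ dP) (hQ : 0 ≤ dQ) (L : Matrix (Fin 2) (Fin 2) ℝ) :
    gelbrichSq6 μQ (diagonal dQ) μP (diagonal dP) L =
      (∑ i, (Lᵀ.mulVec (μQ - μP)) i ^ 2) +
        ((diagonal dQ + diagonal dP) * (L * Lᵀ)).trace -
        2 * Real.sqrt ((diagonal dP * (L * Lᵀ) * diagonal dQ * (L * Lᵀ)).trace +
          2 * Real.sqrt ((diagonal dP).det * (L * Lᵀ).det ^ 2 * (diagonal dQ).det)) := by
  have hSP : (diagonal dP).PosSemidef := .diagonal hP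
  have hSQ : (diagonal dQ).PosSemidef := .diagonal hQ
  have hK : (L * Lᵀ).PosSemidef := by
    simpa using Matrix.posSemidef_self_mul_conjTranspose L
  set R := msqrt6 (diagonal dP) with hRdef
  have hRs : R = (hSP.1.eigenvectorUnitary : Matrix (Fin 2) (Fin 2) ℝ) *
      Matrix.diagonal ((↑) ∘ (Real.sqrt ·) ∘ hSP.1.eigenvalues) *
      (star hSP.1.eigenvectorUnitary : Matrix (Fin 2) (Fin 2) ℝ) := by rw [hRdef, msqrt6, dif_pos hSP]
  have hR : R.PosSemidef := by rw [hRs]; exact (msqrt6_spec6 hSP).1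
  have hRR : R * R = diagonal dP := by rw [hRs]; exact (msqrt6_spec6 hSP).2
  set K := L * Lᵀ with hKdef
  have hM : (R * K * diagonal dQ * K * R).PosSemidef := by
    have h := hSQ.mul_mul_conjTranspose_same (R * K)
    have heq : (R * K) * diagonal dQ * (R * K)ᴴ = R * K * diagonal dQ * K * R := by
      rw [Matrix.conjTranspose_mul, hK.1, hR.1]
      simp only [Matrix.mul_assoc]
    rwa [heq] at h
  have htr : (R * K * diagonal dQ * K * R).trace = (diagonal dP * K * diagonal dQ * K).trace := by
    rw [Matrix.trace_mul_comm]
    congr 1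
    simp only [← Matrix.mul_assoc]
    rw [hRR]
  have hdet : (R * K * diagonal dQ * K * R).det =
      (diagonal dP).det * K.det ^ 2 * (diagonal dQ).det := by
    have h2 : R.det * R.det = (diagonal dP).det := by rw [← Matrix.det_mul, hRR]
    simp only [Matrix.det_mul]
    linear_combination K.det ^ 2 * (diagonal dQ).det * h2
  rw [gelbrichSq6, trace_msqrt6 hM, htr, hdet, enorm6,
    Real.sq_sqrt (Finset.sum_nonneg fun i _ => sq_nonneg _)]


set_option maxHeartbeats 2000000 in
/-- the squared parametrized Gelbrich distance is not convex in `L`: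
for `μP=(0.4,0.6)`, `ΣP=diag(0.1,1.0)`, `μQ=(0.4,0.4)`, `ΣQ=diag(10.0,1.0)`,
`L₁=[[0.7,0],[0.4,1.9]]`, `L₂=[[0.9,0],[0.9,0.6]]`, midpoint value exceeds the
average of values. -/
theorem gelbrichSq_not_convex :
    gelbrichSq6 (d := 2) ![0.4, 0.4] (Matrix.diagonal ![10.0, 1.0])
        ![0.4, 0.6] (Matrix.diagonal ![0.1, 1.0])
        ((1 / 2 : ℝ) • (Matrix.of ![![0.7, 0], ![0.4, 1.9]] +
          Matrix.of ![![0.9, 0], ![0.9, 0.6]])) >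
      (gelbrichSq6 (d := 2) ![0.4, 0.4] (Matrix.diagonal ![10.0, 1.0])
          ![0.4, 0.6] (Matrix.diagonal ![0.1, 1.0])
          (Matrix.of ![![0.7, 0], ![0.4, 1.9]]) +
        gelbrichSq6 (d := 2) ![0.4, 0.4] (Matrix.diagonal ![10.0, 1.0])
          ![0.4, 0.6] (Matrix.diagonal ![0.1, 1.0])
          (Matrix.of ![![0.9, 0], ![0.9, 0.6]])) / 2 := by
  have hP : (0 : Fin 2 → ℝ) ≤ ![0.1, 1.0] := by
    intro i; fin_cases i <;> norm_num
  have hQ : (0 : Fin 2 → ℝ) ≤ ![10.0, 1.0] := by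
    intro i; fin_cases i <;> norm_num
  rw [gelbrich_formula6 _ _ _ _ hP hQ, gelbrich_formula6 _ _ _ _ hP hQ,
    gelbrich_formula6 _ _ _ _ hP hQ]
  norm_num [Matrix.trace_fin_two, Matrix.det_fin_two, Matrix.mul_apply, Matrix.mulVec,
    dotProduct, Fin.sum_univ_two, Matrix.diagonal_apply, Matrix.transpose_apply,
    Matrix.add_apply, Matrix.smul_apply, Matrix.of_apply, Matrix.cons_val',
    Matrix.cons_val_zero, Matrix.cons_val_one, Matrix.head_cons, Matrix.head_fin_const,
    Matrix.empty_val', Matrix.cons_val_fin_one, Pi.sub_apply, Matrix.vecHead, Matrix.vecTail, Matrix.vecMul,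
    Real.sqrt_sq_eq_abs]
  have e1 : Real.sqrt 312900721 = (17689:ℝ) := by
    rw [show (312900721:ℝ) = 17689 ^ 2 by norm_num, Real.sqrt_sq (by norm_num)]
  have e2 : Real.sqrt 100000000 = (10000:ℝ) := by
    rw [show (100000000:ℝ) = 10000 ^ 2 by norm_num, Real.sqrt_sq (by norm_num)]
  have e3 : Real.sqrt 531441 = (729:ℝ) := by
    rw [show (531441:ℝ) = 729 ^ 2 by norm_num, Real.sqrt_sq (by norm_num)]
  have e4 : Real.sqrt 6250000 = (2500:ℝ) := by
    rw [show (6250000:ℝ) = 2500 ^ 2 by norm_num, Real.sqrt_sq (by norm_num)]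
  rw [show Real.sqrt 234783 / Real.sqrt 12500 = Real.sqrt (469566/25000) by
      rw [← Real.sqrt_div (by norm_num)]; norm_num,
    show Real.sqrt 923481 / Real.sqrt 100000 = Real.sqrt (923481/100000) by
      rw [Real.sqrt_div (by norm_num)],
    show Real.sqrt 1816173 / Real.sqrt 200000 = Real.sqrt (1816173/200000) by
      rw [Real.sqrt_div (by norm_num)]]
  have hA : Real.sqrt (1816173/200000) < 30135/10000 := by
    rw [show (1816173/200000:ℝ) = 9.080865 by norm_num]
    rw [show (30135/10000:ℝ) = 3.0135 by norm_num]
    nlinarith [Real.sq_sqrt (show (0:ℝ) ≤ 9.080865 by norm_num),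
      Real.sqrt_nonneg (9.080865:ℝ)]
  have hB : (43338/10000:ℝ) < Real.sqrt (469566/25000) := by
    nlinarith [Real.sq_sqrt (show (0:ℝ) ≤ 469566/25000 by norm_num),
      Real.sqrt_nonneg (469566/25000:ℝ)]
  have hC : (30388/10000:ℝ) < Real.sqrt (923481/100000) := by
    nlinarith [Real.sq_sqrt (show (0:ℝ) ≤ 923481/100000 by norm_num),
      Real.sqrt_nonneg (923481/100000:ℝ)]
  linarith

end
end

section
/- The distributionally robust linear regression with absolute loss and type-1 Mahalanobis cost admits the regularized reformulation: min_w max_{Q ∈ B_ε(P̂;L)} E_{ξ∼Q}|(-w,1)^T ξ| = min_w (1/J) Σⱼ |(-w,1)^T ξ̂ⱼ| + ε ‖(-w,1)‖_{(LL^T)^{-1}}, where the ambiguity set is the type-1 Wasserstein ball of radius ε with cost ‖L^T(ξ₁-ξ₂)‖₂ centered at the empirical distribution of the samples ξ̂₁,…,ξ̂_J. -/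
open scoped BigOperators Matrix ENNReal
open MeasureTheory

noncomputable section

/-- Euclidean norm of a vector in `ℝ^n`. -/
def enorm9 {n : ℕ} (v : Fin n → ℝ) : ℝ := Real.sqrt (∑ i, v i ^ 2)

/-- Type-1 Wasserstein distance with ground cost `‖Lᵀ(ξ₁ − ξ₂)‖₂` between two
measures on `ℝ^n`, as the infimum of the expected cost over couplings. -/
def W1dist {n : ℕ} (μ ν : Measure (Fin n → ℝ)) (L : Matrix (Fin n) (Fin n) ℝ) :
    ENNReal :=
  ⨅ π : {π : Measure ((Fin n → ℝ) × (Fin n → ℝ)) //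
      π.map Prod.fst = μ ∧ π.map Prod.snd = ν},
    ∫⁻ (p : (Fin n → ℝ) × (Fin n → ℝ)),
      ENNReal.ofReal (enorm9 (Lᵀ.mulVec (p.1 - p.2))) ∂π.1

/-- The empirical distribution of `J` samples in `ℝ^n`. -/
def empiricalMeasure {n J : ℕ} (ξ : Fin J → Fin n → ℝ) : Measure (Fin n → ℝ) :=
  ((J : ENNReal))⁻¹ • ∑ j, Measure.dirac (ξ j)

namespace DROaux

/-! ### Linear algebra helpers -/

lemma enorm9_nonneg {n : ℕ} (v : Fin n → ℝ) : 0 ≤ enorm9 v := Real.sqrt_nonneg _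

lemma enorm9_zero {n : ℕ} : enorm9 (0 : Fin n → ℝ) = 0 := by
  simp [enorm9]

lemma enorm9_smul {n : ℕ} (s : ℝ) (v : Fin n → ℝ) : enorm9 (s • v) = |s| * enorm9 v := by
  simp only [enorm9, Pi.smul_apply, smul_eq_mul, mul_pow]
  rw [← Finset.mul_sum, Real.sqrt_mul (sq_nonneg s), Real.sqrt_sq_eq_abs]

lemma enorm9_sq {n : ℕ} (v : Fin n → ℝ) : enorm9 v ^ 2 = ∑ i, v i ^ 2 := by
  rw [enorm9, Real.sq_sqrt (Finset.sum_nonneg fun i _ => sq_nonneg _)]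

lemma abs_dot_le {n : ℕ} (u v : Fin n → ℝ) :
    |u ⬝ᵥ v| ≤ enorm9 u * enorm9 v := by
  have h := Finset.sum_mul_sq_le_sq_mul_sq Finset.univ u v
  have h2 : (u ⬝ᵥ v) ^ 2 ≤ (enorm9 u * enorm9 v) ^ 2 := by
    rw [mul_pow, enorm9_sq, enorm9_sq]; exact h
  have h3 := Real.sqrt_le_sqrt h2
  rwa [Real.sqrt_sq_eq_abs, Real.sqrt_sq (mul_nonneg (enorm9_nonneg u) (enorm9_nonneg v))] at h3

section Mat
variable {n : ℕ} (L : Matrix (Fin n) (Fin n) ℝ) (a : Fin n → ℝ)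

lemma dot_eq_b_dot (hdet : IsUnit L.det) (v : Fin n → ℝ) :
    a ⬝ᵥ v = (L⁻¹ *ᵥ a) ⬝ᵥ (Lᵀ *ᵥ v) := by
  rw [Matrix.dotProduct_mulVec, Matrix.vecMul_transpose, Matrix.mulVec_mulVec,
    Matrix.mul_nonsing_inv _ hdet, Matrix.one_mulVec]

lemma quadform_eq (h : IsUnit L.det) :
    ∑ i, a i * ((L * Lᵀ)⁻¹ *ᵥ a) i = ∑ i, (L⁻¹ *ᵥ a) i ^ 2 := by
  have : (L * Lᵀ)⁻¹ = (Lᵀ)⁻¹ * L⁻¹ := Matrix.mul_inv_rev L Lᵀ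
  have key : a ⬝ᵥ ((L * Lᵀ)⁻¹ *ᵥ a) = (L⁻¹ *ᵥ a) ⬝ᵥ (L⁻¹ *ᵥ a) := by
    rw [this, ← Matrix.mulVec_mulVec, Matrix.dotProduct_mulVec,
      ← Matrix.transpose_nonsing_inv, Matrix.vecMul_transpose]
  simpa [dotProduct, pow_two] using key

lemma det_pos_of_tri (hLtri : ∀ i j : Fin n, i < j → L i j = 0)
    (hLdiag : ∀ i : Fin n, 0 < L i i) : IsUnit L.det := by
  have ht : (Lᵀ).BlockTriangular id := by
    intro i j hij
    exact hLtri j i hij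
  have : L.det = ∏ i, L i i := by
    rw [← Matrix.det_transpose, Matrix.det_of_upperTriangular ht]
    simp [Matrix.transpose_apply]
  rw [this]
  exact (Finset.prod_pos fun i _ => hLdiag i).ne'.isUnit
end Mat

/-! ### Measure-theoretic helpers -/

lemma map_finset_sum {α β : Type*} [MeasurableSpace α] [MeasurableSpace β] {g : α → β}
    (hg : Measurable g) {ι : Type*} (s : Finset ι) (μ : ι → Measure α) :
    (∑ j ∈ s, μ j).map g = ∑ j ∈ s, (μ j).map g := by
  classical
  induction s using Finset.induction_on with
  | empty => simp
  | insert _ _ h ih =>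
      rw [Finset.sum_insert h, Finset.sum_insert h, Measure.map_add _ _ hg, ih]

variable {J : ℕ}

lemma lintegral_emp {α : Type*} [MeasurableSpace α] [MeasurableSingletonClass α]
    (y : Fin J → α) (f : α → ℝ≥0∞) :
    ∫⁻ x, f x ∂(((J : ℝ≥0∞))⁻¹ • ∑ j, Measure.dirac (y j))
      = (J : ℝ≥0∞)⁻¹ * ∑ j, f (y j) := by
  rw [lintegral_smul_measure, lintegral_finset_sum_measure]
  simp [lintegral_dirac]

lemma emp_univ {α : Type*} [MeasurableSpace α] (hJ : 0 < J) (y : Fin J → α) :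
    (((J : ℝ≥0∞))⁻¹ • ∑ j, Measure.dirac (y j)) Set.univ = 1 := by
  rw [Measure.smul_apply]
  have : (∑ j, Measure.dirac (y j)) Set.univ = (J : ℝ≥0∞) := by
    rw [Measure.finset_sum_apply]
    simp
  rw [this, smul_eq_mul, ENNReal.inv_mul_cancel (by exact_mod_cast hJ.ne') (by simp)]

lemma emp_prob {α : Type*} [MeasurableSpace α] (hJ : 0 < J) (y : Fin J → α) :
    IsProbabilityMeasure (((J : ℝ≥0∞))⁻¹ • ∑ j, Measure.dirac (y j)) :=
  ⟨emp_univ hJ y⟩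

lemma map_emp {α β : Type*} [MeasurableSpace α] [MeasurableSpace β] {g : α → β}
    (hg : Measurable g) (y : Fin J → α) :
    (((J : ℝ≥0∞))⁻¹ • ∑ j, Measure.dirac (y j)).map g
      = ((J : ℝ≥0∞))⁻¹ • ∑ j, Measure.dirac (g (y j)) := by
  rw [Measure.map_smul, map_finset_sum hg]
  simp [Measure.map_dirac' hg]

lemma emp_ofReal (hJ : 0 < J) (g : Fin J → ℝ) (hg : ∀ j, 0 ≤ g j) :
    (J : ℝ≥0∞)⁻¹ * ∑ j, ENNReal.ofReal (g j)
      = ENNReal.ofReal ((1 / (J : ℝ)) * ∑ j, g j) := by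
  have hJR : (0:ℝ) < J := by exact_mod_cast hJ
  rw [ENNReal.ofReal_mul (by positivity), ENNReal.ofReal_sum_of_nonneg (fun j _ => hg j)]
  congr 1
  rw [one_div, ENNReal.ofReal_inv_of_pos hJR, ENNReal.ofReal_natCast]

lemma cont_cost {n : ℕ} (L : Matrix (Fin n) (Fin n) ℝ) :
    Continuous fun p : (Fin n → ℝ) × (Fin n → ℝ) => enorm9 (Lᵀ *ᵥ (p.1 - p.2)) := by
  simp only [enorm9, Matrix.mulVec, dotProduct, Pi.sub_apply]
  apply Real.continuous_sqrt.comp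
  apply continuous_finset_sum
  intro i _
  apply Continuous.pow
  apply continuous_finset_sum
  intro j _
  exact continuous_const.mul (((continuous_apply j).comp continuous_fst).sub
    ((continuous_apply j).comp continuous_snd))

lemma meas_absdot {n : ℕ} (a : Fin n → ℝ) :
    Measurable fun x : Fin n → ℝ => |a ⬝ᵥ x| := by
  apply Measurable.abs
  exact Finset.measurable_sum _ fun i _ => by fun_prop

/-! ### The key per-`w` computation of the sup -/

set_option maxHeartbeats 1000000 in
lemma key {n J : ℕ} (hJ : 0 < J) (ξ : Fin J → Fin n → ℝ)
    (L : Matrix (Fin n) (Fin n) ℝ) (ε : ℝ) (hε : 0 < ε)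
    (hdet : IsUnit L.det) (a : Fin n → ℝ) (ha : a ≠ 0) :
    (⨆ Q : {Q : Measure (Fin n → ℝ) // IsProbabilityMeasure Q ∧
        W1dist Q (empiricalMeasure ξ) L ≤ ENNReal.ofReal ε},
      ∫ x, |a ⬝ᵥ x| ∂Q.1)
      = (1 / (J : ℝ)) * ∑ j, |a ⬝ᵥ ξ j| + ε * enorm9 (L⁻¹ *ᵥ a) := by
  classical
  have hdt : IsUnit Lᵀ.det := by rwa [Matrix.det_transpose]
  set b : Fin n → ℝ := L⁻¹ *ᵥ a with hb_def
  set nb : ℝ := enorm9 b with hnb_def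
  set M : ℝ := (1 / (J : ℝ)) * ∑ j, |a ⬝ᵥ ξ j| with hM_def
  set c : ℝ := M + ε * nb with hc_def
  have hJR : (0:ℝ) < J := by exact_mod_cast hJ
  have hb0 : b ≠ 0 := by
    intro h
    apply ha
    have : a = L *ᵥ b := by
      rw [hb_def, Matrix.mulVec_mulVec, Matrix.mul_nonsing_inv _ hdet, Matrix.one_mulVec]
    rw [this, h, Matrix.mulVec_zero]
  have hnb : 0 < nb := by
    obtain ⟨i, hi⟩ := Function.ne_iff.1 hb0
    have hsum : 0 < ∑ i, b i ^ 2 :=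
      Finset.sum_pos' (fun i _ => sq_nonneg _)
        ⟨i, Finset.mem_univ i, by simpa [sq_abs] using pow_pos (abs_pos.2 hi) 2⟩
    exact Real.sqrt_pos.2 hsum
  have hM0 : 0 ≤ M := by
    rw [hM_def]
    positivity
  have hc0 : 0 ≤ c := by
    rw [hc_def]; positivity
  set F : (Fin n → ℝ) → ℝ≥0∞ := fun x => ENNReal.ofReal |a ⬝ᵥ x| with hF_def
  have mF : Measurable F := (meas_absdot a).ennreal_ofReal
  have mcost : Measurable fun p : (Fin n → ℝ) × (Fin n → ℝ) =>
      ENNReal.ofReal (enorm9 (Lᵀ *ᵥ (p.1 - p.2))) := (cont_cost L).measurable.ennreal_ofReal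
  have hPe : ∫⁻ x, F x ∂(empiricalMeasure ξ) = ENNReal.ofReal M := by
    rw [empiricalMeasure, lintegral_emp, hF_def]
    exact emp_ofReal hJ _ fun j => abs_nonneg _
  -- value of the integral via the lintegral
  have hval : ∀ μ : Measure (Fin n → ℝ),
      ∫ x, |a ⬝ᵥ x| ∂μ = (∫⁻ x, F x ∂μ).toReal := by
    intro μ
    rw [integral_eq_lintegral_of_nonneg_ae (Filter.Eventually.of_forall fun x => abs_nonneg _)
      (meas_absdot a).aestronglyMeasurable]
  -- pointwise Lipschitz-type bound
  have hpt : ∀ p : (Fin n → ℝ) × (Fin n → ℝ),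
      F p.1 ≤ F p.2 + ENNReal.ofReal nb * ENNReal.ofReal (enorm9 (Lᵀ *ᵥ (p.1 - p.2))) := by
    intro p
    have h1 : |a ⬝ᵥ p.1| - |a ⬝ᵥ p.2| ≤ |a ⬝ᵥ (p.1 - p.2)| := by
      rw [dotProduct_sub]
      exact abs_sub_abs_le_abs_sub _ _
    have h2 : |a ⬝ᵥ (p.1 - p.2)| ≤ nb * enorm9 (Lᵀ *ᵥ (p.1 - p.2)) := by
      rw [dot_eq_b_dot L a hdet]
      exact abs_dot_le _ _
    have h3 : |a ⬝ᵥ p.1| ≤ |a ⬝ᵥ p.2| + nb * enorm9 (Lᵀ *ᵥ (p.1 - p.2)) := by linarith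
    calc F p.1 ≤ ENNReal.ofReal (|a ⬝ᵥ p.2| + nb * enorm9 (Lᵀ *ᵥ (p.1 - p.2))) :=
          ENNReal.ofReal_le_ofReal h3
      _ = F p.2 + ENNReal.ofReal nb * ENNReal.ofReal (enorm9 (Lᵀ *ᵥ (p.1 - p.2))) := by
          rw [ENNReal.ofReal_add (abs_nonneg _)
            (mul_nonneg hnb.le (enorm9_nonneg _)), ENNReal.ofReal_mul hnb.le]
  -- upper bound
  have upper : ∀ Q : Measure (Fin n → ℝ), IsProbabilityMeasure Q →
      W1dist Q (empiricalMeasure ξ) L ≤ ENNReal.ofReal ε →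
      ∫⁻ x, F x ∂Q ≤ ENNReal.ofReal c := by
    intro Q hQp hQW
    refine ENNReal.le_of_forall_pos_le_add fun η hη _ => ?_
    set δ : ℝ := (η : ℝ) / nb with hδ_def
    have hδ : 0 < δ := div_pos (by exact_mod_cast hη) hnb
    have hlt : W1dist Q (empiricalMeasure ξ) L < ENNReal.ofReal ε + ENNReal.ofReal δ :=
      lt_of_le_of_lt hQW (ENNReal.lt_add_right (by simp) (ENNReal.ofReal_pos.2 hδ).ne')
    rw [W1dist, iInf_lt_iff] at hlt
    obtain ⟨⟨π, hfst, hsnd⟩, hπ⟩ := hlt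
    have hQint : ∫⁻ x, F x ∂Q = ∫⁻ p, F p.1 ∂π := by
      rw [← hfst, lintegral_map mF measurable_fst]
    have hPint : ∫⁻ p, F p.2 ∂π = ENNReal.ofReal M := by
      rw [← hPe, ← hsnd, lintegral_map mF measurable_snd]
    have calc1 : ∫⁻ x, F x ∂Q ≤ ENNReal.ofReal M +
        ENNReal.ofReal nb * (ENNReal.ofReal ε + ENNReal.ofReal δ) := by
      calc ∫⁻ x, F x ∂Q = ∫⁻ p, F p.1 ∂π := hQint
        _ ≤ ∫⁻ p, (F p.2 + ENNReal.ofReal nb *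
              ENNReal.ofReal (enorm9 (Lᵀ *ᵥ (p.1 - p.2)))) ∂π := lintegral_mono hpt
        _ = ∫⁻ p, F p.2 ∂π + ENNReal.ofReal nb *
              ∫⁻ p, ENNReal.ofReal (enorm9 (Lᵀ *ᵥ (p.1 - p.2))) ∂π := by
            rw [lintegral_add_right _ (mcost.const_mul _), lintegral_const_mul _ mcost]
        _ ≤ ENNReal.ofReal M + ENNReal.ofReal nb * (ENNReal.ofReal ε + ENNReal.ofReal δ) := by
            rw [hPint]
            exact add_le_add_right (mul_le_mul_right hπ.le _) _
    have heq : ENNReal.ofReal M + ENNReal.ofReal nb * (ENNReal.ofReal ε + ENNReal.ofReal δ)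
        = ENNReal.ofReal c + (η : ℝ≥0∞) := by
      rw [mul_add, ← ENNReal.ofReal_mul hnb.le, ← ENNReal.ofReal_mul hnb.le]
      have h1 : nb * δ = (η : ℝ) := by
        rw [hδ_def]; field_simp
      rw [h1, ENNReal.ofReal_coe_nnreal, ← add_assoc, ← ENNReal.ofReal_add hM0
        (by positivity), hc_def, mul_comm nb ε]
    rw [heq] at calc1
    exact calc1
  -- the empirical measure itself is feasible
  have hW_self : W1dist (empiricalMeasure ξ) (empiricalMeasure ξ) L ≤ ENNReal.ofReal ε := by
    set π₀ : Measure ((Fin n → ℝ) × (Fin n → ℝ)) :=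
      ((J : ℝ≥0∞))⁻¹ • ∑ j, Measure.dirac (ξ j, ξ j) with hπ₀_def
    have hfst : π₀.map Prod.fst = empiricalMeasure ξ := by
      rw [hπ₀_def, map_emp measurable_fst, empiricalMeasure]
    have hsnd : π₀.map Prod.snd = empiricalMeasure ξ := by
      rw [hπ₀_def, map_emp measurable_snd, empiricalMeasure]
    have : W1dist (empiricalMeasure ξ) (empiricalMeasure ξ) L ≤
        ∫⁻ p, ENNReal.ofReal (enorm9 (Lᵀ *ᵥ (p.1 - p.2))) ∂π₀ :=
      by unfold W1dist; exact iInf_le_of_le (⟨π₀, hfst, hsnd⟩ : {π : Measure ((Fin n → ℝ) × (Fin n → ℝ)) //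
        π.map Prod.fst = empiricalMeasure ξ ∧ π.map Prod.snd = empiricalMeasure ξ}) le_rfl
    refine this.trans ?_
    rw [hπ₀_def, lintegral_emp]
    simp [enorm9_zero]
  haveI : Nonempty {Q : Measure (Fin n → ℝ) // IsProbabilityMeasure Q ∧
      W1dist Q (empiricalMeasure ξ) L ≤ ENNReal.ofReal ε} :=
    ⟨⟨empiricalMeasure ξ, emp_prob hJ ξ, hW_self⟩⟩
  -- lower bound construction
  have lower : ∀ δ : ℝ, 0 < δ → ∃ Q : {Q : Measure (Fin n → ℝ) // IsProbabilityMeasure Q ∧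
      W1dist Q (empiricalMeasure ξ) L ≤ ENNReal.ofReal ε},
      c - δ < ∫ x, |a ⬝ᵥ x| ∂Q.1 := by
    intro δ hδ
    set θ : ℝ := min 1 (δ / (2 * M + 1)) with hθ_def
    have hθpos : 0 < θ := lt_min one_pos (div_pos hδ (by linarith))
    have hθ1 : θ ≤ 1 := min_le_left _ _
    have h2θM : 2 * θ * M < δ := by
      have h := min_le_right 1 (δ / (2 * M + 1))
      have h' : θ * (2 * M + 1) ≤ δ := by
        rw [hθ_def]
        exact (le_div_iff₀ (by linarith)).1 h
      nlinarith
    set s : ℝ := ε / θ with hs_def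
    have hs : 0 < s := div_pos hε hθpos
    have hθs : θ * s = ε := by
      rw [hs_def]; field_simp
    set u : Fin n → ℝ := nb⁻¹ • b with hu_def
    set d : Fin n → ℝ := (Lᵀ)⁻¹ *ᵥ u with hd_def
    have hLd : Lᵀ *ᵥ d = u := by
      rw [hd_def, Matrix.mulVec_mulVec, Matrix.mul_nonsing_inv _ hdt, Matrix.one_mulVec]
    have hu1 : enorm9 u = 1 := by
      rw [hu_def, enorm9_smul, abs_of_nonneg (inv_nonneg.2 hnb.le), ← hnb_def,
        inv_mul_cancel₀ hnb.ne']
    have had : a ⬝ᵥ d = nb := by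
      rw [dot_eq_b_dot L a hdet, hLd, ← hb_def, hu_def, dotProduct_smul,
        smul_eq_mul]
      have : b ⬝ᵥ b = nb ^ 2 := by
        rw [hnb_def, enorm9_sq]
        simp [dotProduct, pow_two]
      rw [this, sq]
      field_simp
    set y2 : Fin J → Fin n → ℝ := fun j => ξ j + s • d with hy2_def
    have hady2 : ∀ j, a ⬝ᵥ y2 j = a ⬝ᵥ ξ j + s * nb := by
      intro j
      rw [hy2_def]
      simp only [dotProduct_add, dotProduct_smul, smul_eq_mul, had]
    set ν : Measure (Fin n → ℝ) := ((J : ℝ≥0∞))⁻¹ • ∑ j, Measure.dirac (y2 j) with hν_def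
    set Q : Measure (Fin n → ℝ) := ENNReal.ofReal (1 - θ) • empiricalMeasure ξ
      + ENNReal.ofReal θ • ν with hQ_def
    set π : Measure ((Fin n → ℝ) × (Fin n → ℝ)) :=
      ENNReal.ofReal (1 - θ) • (((J : ℝ≥0∞))⁻¹ • ∑ j, Measure.dirac (ξ j, ξ j))
      + ENNReal.ofReal θ • (((J : ℝ≥0∞))⁻¹ • ∑ j, Measure.dirac (y2 j, ξ j)) with hπ_def
    have hfst : π.map Prod.fst = Q := by
      rw [hπ_def, Measure.map_add _ _ measurable_fst]
      simp only [Measure.map_smul, map_finset_sum measurable_fst,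
        Measure.map_dirac' measurable_fst]
      rw [hQ_def, hν_def]
      simp only [empiricalMeasure]
    have hsnd : π.map Prod.snd = empiricalMeasure ξ := by
      rw [hπ_def, Measure.map_add _ _ measurable_snd]
      simp only [Measure.map_smul, map_finset_sum measurable_snd,
        Measure.map_dirac' measurable_snd]
      rw [← add_smul, ← ENNReal.ofReal_add (by linarith) hθpos.le, sub_add_cancel,
        ENNReal.ofReal_one, one_smul]
      simp only [empiricalMeasure]
    have hQprob : IsProbabilityMeasure Q := by
      constructor
      rw [hQ_def, Measure.coe_add, Pi.add_apply, Measure.smul_apply, Measure.smul_apply,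
        hν_def, emp_univ hJ, empiricalMeasure, emp_univ hJ]
      simp only [smul_eq_mul, mul_one]
      rw [← ENNReal.ofReal_add (by linarith) hθpos.le, sub_add_cancel, ENNReal.ofReal_one]
    have hcost : ∫⁻ p, ENNReal.ofReal (enorm9 (Lᵀ *ᵥ (p.1 - p.2))) ∂π = ENNReal.ofReal ε := by
      have t1 : ∀ j : Fin J, ENNReal.ofReal (enorm9 (Lᵀ *ᵥ (ξ j - ξ j))) = 0 := by
        intro j
        simp [Matrix.mulVec_zero, enorm9_zero]
      have t2 : ∀ j : Fin J, ENNReal.ofReal (enorm9 (Lᵀ *ᵥ (y2 j - ξ j)))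
          = ENNReal.ofReal s := by
        intro j
        have hdiff : (y2 j) - ξ j = s • d := by
          rw [hy2_def]
          exact add_sub_cancel_left (ξ j) (s • d)
        rw [hdiff, Matrix.mulVec_smul, hLd, enorm9_smul, hu1, mul_one, abs_of_pos hs]
      rw [hπ_def]
      simp only [lintegral_add_measure, lintegral_smul_measure,
        lintegral_finset_sum_measure, lintegral_dirac, t1, t2, smul_eq_mul]
      rw [Finset.sum_const_zero, mul_zero, mul_zero, zero_add, Finset.sum_const,
        Finset.card_univ, Fintype.card_fin, nsmul_eq_mul]
      have hJs : ((J : ℝ≥0∞))⁻¹ * ((J : ℝ≥0∞) * ENNReal.ofReal s) = ENNReal.ofReal s := by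
        rw [← mul_assoc, ENNReal.inv_mul_cancel (by exact_mod_cast hJ.ne') (by simp), one_mul]
      rw [hJs, ← ENNReal.ofReal_mul hθpos.le, hθs]
    have hW : W1dist Q (empiricalMeasure ξ) L ≤ ENNReal.ofReal ε := by
      have : W1dist Q (empiricalMeasure ξ) L ≤
          ∫⁻ p, ENNReal.ofReal (enorm9 (Lᵀ *ᵥ (p.1 - p.2))) ∂π :=
        by unfold W1dist; exact iInf_le_of_le (⟨π, hfst, hsnd⟩ : {π : Measure ((Fin n → ℝ) × (Fin n → ℝ)) //
          π.map Prod.fst = Q ∧ π.map Prod.snd = empiricalMeasure ξ}) le_rfl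
      rw [hcost] at this
      exact this
    -- value of the integral at Q
    set M₂ : ℝ := (1 / (J : ℝ)) * ∑ j, |a ⬝ᵥ y2 j| with hM₂_def
    have hM₂0 : 0 ≤ M₂ := by rw [hM₂_def]; positivity
    have hνint : ∫⁻ x, F x ∂ν = ENNReal.ofReal M₂ := by
      rw [hν_def, lintegral_emp, hF_def, hM₂_def]
      exact emp_ofReal hJ _ fun j => abs_nonneg _
    have hQval : ∫ x, |a ⬝ᵥ x| ∂Q = (1 - θ) * M + θ * M₂ := by
      rw [hval Q, hQ_def, lintegral_add_measure, lintegral_smul_measure,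
        lintegral_smul_measure, smul_eq_mul, smul_eq_mul, hPe, hνint, ← ENNReal.ofReal_mul (by linarith),
        ← ENNReal.ofReal_mul hθpos.le, ← ENNReal.ofReal_add
        (by nlinarith) (by positivity), ENNReal.toReal_ofReal (by nlinarith)]
    have hM₂low : s * nb - M ≤ M₂ := by
      have hsum : ∑ j : Fin J, (s * nb - |a ⬝ᵥ ξ j|) ≤ ∑ j, |a ⬝ᵥ y2 j| := by
        apply Finset.sum_le_sum
        intro j _
        have habs : s * nb ≤ |a ⬝ᵥ ξ j + s * nb| + |a ⬝ᵥ ξ j| := by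
          calc s * nb = |s * nb| := (abs_of_nonneg (by positivity)).symm
            _ = |(a ⬝ᵥ ξ j + s * nb) - a ⬝ᵥ ξ j| := by ring_nf
            _ ≤ |a ⬝ᵥ ξ j + s * nb| + |a ⬝ᵥ ξ j| := abs_sub _ _
        rw [hady2 j]
        linarith
      rw [Finset.sum_sub_distrib, Finset.sum_const, Finset.card_univ, Fintype.card_fin,
        nsmul_eq_mul] at hsum
      have h := mul_le_mul_of_nonneg_left hsum (by positivity : (0:ℝ) ≤ 1 / (J : ℝ))
      rw [mul_sub] at h
      have hJc : (1 / (J : ℝ)) * ((J : ℝ) * (s * nb)) = s * nb := by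
        field_simp
      rw [hJc] at h
      rw [hM₂_def, hM_def]
      linarith
    refine ⟨⟨Q, hQprob, hW⟩, ?_⟩
    rw [hQval]
    have hθM₂ : θ * (s * nb - M) ≤ θ * M₂ := mul_le_mul_of_nonneg_left hM₂low hθpos.le
    have hθsnb : θ * (s * nb) = ε * nb := by rw [← mul_assoc, hθs]
    nlinarith
  -- assemble
  apply ciSup_eq_of_forall_le_of_forall_lt_exists_gt
  · rintro ⟨Q, hQp, hQW⟩
    rw [hval Q]
    exact ENNReal.toReal_le_of_le_ofReal hc0 (upper Q hQp hQW)
  · intro y hy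
    obtain ⟨Q, hQ⟩ := lower (c - y) (by linarith)
    refine ⟨Q, ?_⟩
    have : c - (c - y) = y := by ring
    rwa [this] at hQ

end DROaux

/-- the DRO linear regression with absolute loss and type-1
Mahalanobis transportation cost admits the regularized reformulation
`min_w max_{Q ∈ B_ε(P̂;L)} E_Q |(-w,1)ᵀξ|
  = min_w (1/J) Σⱼ |(-w,1)ᵀξ̂ⱼ| + ε ‖(-w,1)‖_{(LLᵀ)⁻¹}`. -/
theorem dro_linreg_abs_reformulation (k J : ℕ) (hJ : 0 < J)
    (ξ : Fin J → Fin (k + 1) → ℝ) (L : Matrix (Fin (k + 1)) (Fin (k + 1)) ℝ)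
    (ε : ℝ) (hε : 0 < ε)
    (hLtri : ∀ i j : Fin (k + 1), i < j → L i j = 0)
    (hLdiag : ∀ i : Fin (k + 1), 0 < L i i) :
    (⨅ w : Fin k → ℝ,
      ⨆ Q : {Q : Measure (Fin (k + 1) → ℝ) // IsProbabilityMeasure Q ∧
          W1dist Q (empiricalMeasure ξ) L ≤ ENNReal.ofReal ε},
        ∫ x, |∑ i, (Fin.snoc (fun i => -(w i)) 1 : Fin (k + 1) → ℝ) i * x i| ∂Q.1) =
    (⨅ w : Fin k → ℝ,
      (1 / (J : ℝ)) * ∑ j, |∑ i, (Fin.snoc (fun i => -(w i)) 1 : Fin (k + 1) → ℝ) i * ξ j i| +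
        ε * Real.sqrt (∑ i, (Fin.snoc (fun i => -(w i)) 1 : Fin (k + 1) → ℝ) i *
          ((L * Lᵀ)⁻¹.mulVec (Fin.snoc (fun i => -(w i)) 1)) i)) := by
  have hdet : IsUnit L.det := DROaux.det_pos_of_tri L hLtri hLdiag
  refine iInf_congr fun w => ?_
  set a : Fin (k + 1) → ℝ := Fin.snoc (fun i => -(w i)) 1 with ha_def
  have ha : a ≠ 0 := by
    intro h
    have := congrFun h (Fin.last k)
    rw [ha_def] at this
    simp [Fin.snoc_last] at this
  have h := DROaux.key hJ ξ L ε hε hdet a ha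
  rw [DROaux.quadform_eq L a hdet]
  exact h

end
end

section
/- The KKT conditions of a conic program — A^T y + c = 0, s = −Ax + b, s^T y = 0, with s ∈ K and y ∈ K* — are equivalent to the projection equations A^T Π_{K*}(v) + c = 0 and −Au + v − Π_{K*}(v) + b = 0, under the identification u = x, v = y − s. -/
open scoped BigOperators Matrix RealInnerProductSpace

noncomputable section

/-- Euclidean norm of a vector in `ℝ^m`. -/
def enorm11 {m : ℕ} (v : Fin m → ℝ) : ℝ := Real.sqrt (∑ i, v i ^ 2)

/-- the KKT conditions of a conic program
`Aᵀy + c = 0, s = −Ax + b, sᵀy = 0, s ∈ K, y ∈ K*` are equivalent to the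
projection equations `Aᵀ proj(v) + c = 0` and `−Au + v − proj(v) + b = 0`
under the identification `u = x`, `v = y − s`. Here `K` is a nonempty closed
convex cone, `K*` its dual cone, and `Π` the Euclidean projection onto `K*`
(characterized as the distance minimizer). -/
theorem kkt_iff_projection_equations (n m : ℕ)
    (K : Set (Fin m → ℝ)) (hKne : K.Nonempty) (hKcl : IsClosed K)
    (hKconv : Convex ℝ K) (hKcone : ∀ c : ℝ, 0 < c → ∀ z ∈ K, c • z ∈ K)
    (dual : Set (Fin m → ℝ))
    (hdual : dual = {y | ∀ z ∈ K, 0 ≤ ∑ i, y i * z i})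
    (proj : (Fin m → ℝ) → (Fin m → ℝ))
    (hproj : ∀ v, proj v ∈ dual ∧ ∀ z ∈ dual, enorm11 (v - proj v) ≤ enorm11 (v - z))
    (A : Matrix (Fin m) (Fin n) ℝ) (b : Fin m → ℝ) (c : Fin n → ℝ)
    (u : Fin n → ℝ) (v : Fin m → ℝ) :
    (∃ s y : Fin m → ℝ, s ∈ K ∧ y ∈ dual ∧
        Aᵀ.mulVec y + c = 0 ∧ s = -(A.mulVec u) + b ∧
        (∑ i, s i * y i) = 0 ∧ v = y - s) ↔
      (Aᵀ.mulVec (proj v) + c = 0 ∧ -(A.mulVec u) + v - proj v + b = 0) := by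
  classical
  let E := EuclideanSpace ℝ (Fin m)
  let e : (Fin m → ℝ) → E := fun w => (WithLp.equiv 2 (Fin m → ℝ)).symm w
  have he : ∀ (w : Fin m → ℝ) (i : Fin m), e w i = w i := fun _ _ => rfl
  have hesub : ∀ a b : Fin m → ℝ, e (a - b) = e a - e b := fun _ _ => rfl
  have heinj : ∀ a b : Fin m → ℝ, e a = e b → a = b := by
    intro a b h
    funext i
    exact congrFun (congrArg (fun (w : E) => (WithLp.equiv 2 (Fin m → ℝ)) w) h) i
  have hnorm : ∀ w : Fin m → ℝ, enorm11 w = ‖e w‖ := by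
    intro w
    rw [EuclideanSpace.norm_eq]
    simp only [enorm11, he, Real.norm_eq_abs, sq_abs]
  have hinner : ∀ a b : Fin m → ℝ, ⟪e a, e b⟫ = ∑ i, a i * b i := by
    intro a b
    rw [PiLp.inner_apply]
    exact Finset.sum_congr rfl fun i _ => by simp [he, mul_comm]
  -- dual cone facts
  have hD0 : (0 : Fin m → ℝ) ∈ dual := by
    rw [hdual]; intro z _; simp
  have hDadd : ∀ a ∈ dual, ∀ b ∈ dual, a + b ∈ dual := by
    rw [hdual]
    intro a ha b hb z hz
    have := add_nonneg (ha z hz) (hb z hz)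
    simpa [add_mul, Finset.sum_add_distrib] using this
  -- the dual cone as a subset of E
  let DE : Set E := {x : E | (WithLp.equiv 2 (Fin m → ℝ)) x ∈ dual}
  have hDE : ∀ w : Fin m → ℝ, e w ∈ DE ↔ w ∈ dual := fun _ => Iff.rfl
  have hDEsurj : ∀ x : E, x ∈ DE → ∃ w ∈ dual, e w = x := by
    intro x hx
    exact ⟨(WithLp.equiv 2 (Fin m → ℝ)) x, hx, rfl⟩
  have hDconvE : Convex ℝ DE := by
    intro a ha b hb t1 t2 ht1 ht2 hts
    show (WithLp.equiv 2 (Fin m → ℝ)) (t1 • a + t2 • b) ∈ dual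
    rw [hdual]
    intro z hz
    have ha' : (WithLp.equiv 2 (Fin m → ℝ)) a ∈ dual := ha
    have hb' : (WithLp.equiv 2 (Fin m → ℝ)) b ∈ dual := hb
    rw [hdual] at ha' hb'
    have hpt : ∑ i, ((WithLp.equiv 2 (Fin m → ℝ)) (t1 • a + t2 • b)) i * z i
        = t1 * (∑ i, ((WithLp.equiv 2 (Fin m → ℝ)) a) i * z i)
          + t2 * (∑ i, ((WithLp.equiv 2 (Fin m → ℝ)) b) i * z i) := by
      rw [Finset.mul_sum, Finset.mul_sum, ← Finset.sum_add_distrib]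
      refine Finset.sum_congr rfl fun i _ => ?_
      show (t1 * a i + t2 * b i) * z i
          = t1 * (a i * z i) + t2 * (b i * z i)
      ring
    rw [hpt]
    exact add_nonneg (mul_nonneg ht1 (ha' z hz)) (mul_nonneg ht2 (hb' z hz))
  -- variational characterization of the projection
  obtain ⟨hpmem, hpmin⟩ := hproj v
  set p := proj v with hp
  have hpmemE : e p ∈ DE := hpmem
  haveI : Nonempty DE := ⟨⟨e p, hpmemE⟩⟩
  have hinf : ‖e v - e p‖ = ⨅ w : DE, ‖e v - (w : E)‖ := by
    refine le_antisymm (le_ciInf fun w => ?_) ?_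
    · obtain ⟨z, hz, hez⟩ := hDEsurj w w.2
      rw [← hez, ← hesub, ← hesub, ← hnorm, ← hnorm]
      exact hpmin z hz
    · exact ciInf_le ⟨0, fun x ⟨w, hw⟩ => hw ▸ norm_nonneg _⟩ (⟨e p, hpmemE⟩ : DE)
  have hvarE : ∀ w ∈ DE, ⟪e v - e p, w - e p⟫ ≤ 0 :=
    (norm_eq_iInf_iff_real_inner_le_zero hDconvE hpmemE).1 hinf
  have hvar : ∀ z ∈ dual, ⟪e v - e p, e z - e p⟫ ≤ 0 := fun z hz => hvarE (e z) hz
  have h2p : e (p + p) = e p + e p := rfl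
  have hvp : ⟪e v - e p, e p⟫ ≤ 0 := by
    have := hvar (p + p) (hDadd p hpmem p hpmem)
    rw [h2p] at this
    simpa using this
  have hvp' : 0 ≤ ⟪e v - e p, e p⟫ := by
    have := hvar 0 hD0
    have h0 : e (0 : Fin m → ℝ) = 0 := rfl
    rw [h0, zero_sub, inner_neg_right] at this
    linarith
  have horth : ⟪e v - e p, e p⟫ = 0 := le_antisymm hvp hvp'
  have hneg : ∀ z ∈ dual, ⟪e v - e p, e z⟫ ≤ 0 := by
    intro z hz
    have h1 := hvar z hz
    have hsplit : ⟪e v - e p, e z⟫ = ⟪e v - e p, e z - e p⟫ + ⟪e v - e p, e p⟫ := by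
      rw [← inner_add_right]; congr 1; abel
    rw [hsplit, horth, add_zero]
    exact h1
  -- the cone as a ConvexCone in E
  let KE : Set E := {x : E | (WithLp.equiv 2 (Fin m → ℝ)) x ∈ K}
  have hKE : ∀ w : Fin m → ℝ, e w ∈ KE ↔ w ∈ K := fun _ => Iff.rfl
  let KC : ConvexCone ℝ E :=
    { carrier := KE
      smul_mem' := by
        intro c hc x hx
        show (WithLp.equiv 2 (Fin m → ℝ)) (c • x) ∈ K
        have : (WithLp.equiv 2 (Fin m → ℝ)) (c • x)
            = c • ((WithLp.equiv 2 (Fin m → ℝ)) x) := rfl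
        rw [this]
        exact hKcone c hc _ hx
      add_mem' := by
        intro x hx y hy
        show (WithLp.equiv 2 (Fin m → ℝ)) (x + y) ∈ K
        have hxy : (WithLp.equiv 2 (Fin m → ℝ)) (x + y)
            = (WithLp.equiv 2 (Fin m → ℝ)) x + (WithLp.equiv 2 (Fin m → ℝ)) y := rfl
        rw [hxy]
        set a := (WithLp.equiv 2 (Fin m → ℝ)) x with hax
        set b := (WithLp.equiv 2 (Fin m → ℝ)) y with hbx
        have ha : a ∈ K := hx
        have hb : b ∈ K := hy
        have hmid : (1/2 : ℝ) • a + (1/2 : ℝ) • b ∈ K :=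
          hKconv ha hb (by norm_num) (by norm_num) (by norm_num)
        have h2 := hKcone 2 (by norm_num) _ hmid
        have : (2:ℝ) • ((1/2 : ℝ) • a + (1/2 : ℝ) • b) = a + b := by
          rw [smul_add, smul_smul, smul_smul]; norm_num
        rwa [this] at h2 }
  have hKCne : (KC : Set E).Nonempty := by
    obtain ⟨k, hk⟩ := hKne
    exact ⟨e k, hk⟩
  have hKCcl : IsClosed (KC : Set E) := by
    have : (KC : Set E) = KE := rfl
    rw [this]
    exact hKcl.preimage (PiLp.continuous_ofLp 2 _)
  let PC : ProperCone ℝ E :=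
    ⟨KC.toPointedCone (ConvexCone.Pointed.of_nonempty_of_isClosed hKCne hKCcl), hKCcl⟩
  have hdualE : DE = (ProperCone.innerDual (PC : Set E) : Set E) := by
    ext x
    rw [SetLike.mem_coe, ProperCone.mem_innerDual]
    constructor
    · intro hx w hw
      obtain ⟨z, hz, hez⟩ : ∃ z ∈ K, e z = w :=
        ⟨(WithLp.equiv 2 (Fin m → ℝ)) w, hw, rfl⟩
      obtain ⟨y, hy, hey⟩ := hDEsurj x hx
      rw [← hez, ← hey, real_inner_comm, hinner]
      rw [hdual] at hy
      exact hy z hz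
    · intro hx
      show (WithLp.equiv 2 (Fin m → ℝ)) x ∈ dual
      rw [hdual]
      intro z hz
      have := hx (x := e z) hz
      rw [real_inner_comm] at this
      have hxx : x = e ((WithLp.equiv 2 (Fin m → ℝ)) x) := rfl
      rw [hxx, hinner] at this
      exact this
  have hbidual := ProperCone.innerDual_innerDual PC
  have hpvK : p - v ∈ K := by
    have hmem : e (p - v) ∈ (ProperCone.innerDual (ProperCone.innerDual (PC : Set E) : Set E) : Set E) := by
      rw [SetLike.mem_coe, ProperCone.mem_innerDual]
      intro x hx
      rw [← hdualE] at hx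
      obtain ⟨z, hz, hez⟩ := hDEsurj x hx
      have := hneg z hz
      rw [← hez, real_inner_comm, hesub]
      have hswap : ⟪e p - e v, e z⟫ = -⟪e v - e p, e z⟫ := by
        rw [← inner_neg_left]; congr 1; abel
      rw [hswap]
      linarith
    rw [hbidual] at hmem
    exact hmem
  have hsy0 : (∑ i, (p - v) i * p i) = 0 := by
    have h1 : ⟪e (p - v), e p⟫ = 0 := by
      rw [hesub]
      have hswap : ⟪e p - e v, e p⟫ = -⟪e v - e p, e p⟫ := by
        rw [← inner_neg_left]; congr 1; abel
      rw [hswap, horth, neg_zero]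
    rw [hinner] at h1
    exact h1
  constructor
  · rintro ⟨s, y, hsK, hyD, hstat, hfeas, hcomp, hvys⟩
    -- y satisfies the variational inequality, hence equals the projection
    have hyvar : ∀ z ∈ dual, ⟪e v - e y, e z - e y⟫ ≤ 0 := by
      intro z hz
      have hzy : ∑ i, (z - y) i * s i = (∑ i, z i * s i) - ∑ i, y i * s i := by
        rw [← Finset.sum_sub_distrib]
        refine Finset.sum_congr rfl fun i _ => ?_
        show (z i - y i) * s i = z i * s i - y i * s i
        ring
      have hys : ∑ i, y i * s i = 0 := by
        rw [← hcomp]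
        exact Finset.sum_congr rfl fun i _ => by ring
      have hzs : 0 ≤ ∑ i, z i * s i := by
        rw [hdual] at hz
        exact hz s hsK
      have hkey : 0 ≤ ∑ i, (z - y) i * s i := by rw [hzy, hys]; linarith
      have hvy : e v - e y = -(e s) := by
        rw [← hesub, hvys]
        have : y - s - y = -s := by abel
        rw [this]
        rfl
      rw [hvy, inner_neg_left, ← hesub, real_inner_comm, hinner]
      linarith
    have hpy : p = y := by
      have h1 := hvar y hyD
      have h2 := hyvar p hpmem
      have hsum : ⟪e y - e p, e y - e p⟫ ≤ 0 := by
        have hkey : ⟪e y - e p, e y - e p⟫ =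
            ⟪e v - e p, e y - e p⟫ - ⟪e v - e y, e y - e p⟫ := by
          rw [← inner_sub_left]; congr 1; abel
        have h2' : ⟪e v - e y, e p - e y⟫ = -⟪e v - e y, e y - e p⟫ := by
          rw [← inner_neg_right]; congr 1; abel
        rw [h2'] at h2
        rw [hkey]
        linarith
      have h0 : e y - e p = 0 := by
        have h3 : ⟪e y - e p, e y - e p⟫ ≤ 0 := hsum
        exact real_inner_self_nonpos.mp h3
      have := heinj y p (by rwa [sub_eq_zero] at h0)
      exact this.symm
    constructor
    · rw [hpy]; exact hstat
    · rw [hpy, hvys, hfeas]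
      funext i
      simp only [Pi.add_apply, Pi.sub_apply, Pi.neg_apply, Pi.zero_apply]
      ring
  · rintro ⟨hstat, hfeas⟩
    refine ⟨p - v, p, hpvK, hpmem, hstat, ?_, hsy0, ?_⟩
    · funext i
      have := congrFun hfeas i
      simp only [Pi.add_apply, Pi.sub_apply, Pi.neg_apply, Pi.zero_apply] at this
      simp only [Pi.sub_apply, Pi.add_apply, Pi.neg_apply]
      linarith
    · funext i
      simp
end
end
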